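/- Let G₀ be the combinatorial Gauss diagram with exactly two chords whose four endpoints alternate around the circle (so the two chords are interlinked) and whose signs are both −1 (the Gauss diagram of the left-hand virtual trefoil). Then J(G₀) = −2, G₀ is not parallel, and a single arc-shift move transforms G₀ into a parallel Gauss diagram; hence the minimum number of arc-shift or sign-flip moves needed to transform G₀ into a parallel Gauss diagram is exactly 1 (the Gauss-diagram form of the statement that the virtual left-hand trefoil has arc shift number 1). -/

import Mathlib

open scoped Classical

/-- The cyclically next position on a circle of `m` marked points. -/
def nextPos {m : ℕ} (p : Fin m) : Fin m :=
  ⟨(p.val + 1) % m, Nat.mod_lt _ p.pos⟩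

/-- `Inside a b x` : the point `x` lies strictly inside the cyclic interval
running from `a` (forward) to `b`. -/
def Inside {m : ℕ} (a b x : Fin m) : Prop :=
  0 < (x - a).val ∧ (x - a).val < (b - a).val

/-- A combinatorial Gauss diagram with `n` chords: a bijection assigning to each
chord its two endpoints among `2 * n` cyclically ordered points, together with a
sign function taking values in `{-1, 1}`. -/
structure GaussDiagram (n : ℕ) where
  endpoint : Fin n × Bool ≃ Fin (2 * n)
  sign : Fin n → ℤ
  sign_pm : ∀ c, sign c = 1 ∨ sign c = -1

/-- Two chords are interlinked if exactly one endpoint of `d` lies strictly inside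
the cyclic interval from `endpoint (c, false)` to `endpoint (c, true)`. -/
def Interlinked {n : ℕ} (G : GaussDiagram n) (c d : Fin n) : Prop :=
  Xor'
    (Inside (G.endpoint (c, false)) (G.endpoint (c, true)) (G.endpoint (d, false)))
    (Inside (G.endpoint (c, false)) (G.endpoint (c, true)) (G.endpoint (d, true)))

/-- A chord is odd if it is interlinked with an odd number of other chords. -/
def OddChord {n : ℕ} (G : GaussDiagram n) (c : Fin n) : Prop :=
  Odd ((Finset.univ.filter fun d => d ≠ c ∧ Interlinked G c d).card)

/-- The odd writhe: the sum of the signs of the odd chords. -/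
noncomputable def oddWrithe {n : ℕ} (G : GaussDiagram n) : ℤ :=
  ∑ c ∈ Finset.univ.filter (fun c => OddChord G c), G.sign c

/-- `AdjSwap G G' p c d` : `G'` is obtained from `G` by the adjacent endpoint swap at
the cyclically adjacent positions `p`, `p+1`, which are occupied by endpoints of the
two distinct chords `c` and `d`; all signs are unchanged. -/
def AdjSwap {n : ℕ} (G G' : GaussDiagram n) (p : Fin (2 * n)) (c d : Fin n) : Prop :=
  c ≠ d ∧ (G.endpoint.symm p).1 = c ∧ (G.endpoint.symm (nextPos p)).1 = d ∧
    G'.endpoint = G.endpoint.trans (Equiv.swap p (nextPos p)) ∧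
    G'.sign = G.sign

/-- `ArcShift G G' p c d` : `G'` is obtained from `G` by the arc-shift move at the
cyclically adjacent positions `p`, `p+1`, occupied by endpoints of the two distinct
chords `c` and `d`: the two endpoints are exchanged and the signs of `c` and `d`
are negated. -/
def ArcShift {n : ℕ} (G G' : GaussDiagram n) (p : Fin (2 * n)) (c d : Fin n) : Prop :=
  c ≠ d ∧ (G.endpoint.symm p).1 = c ∧ (G.endpoint.symm (nextPos p)).1 = d ∧
    G'.endpoint = G.endpoint.trans (Equiv.swap p (nextPos p)) ∧
    G'.sign = fun e => if e = c ∨ e = d then -G.sign e else G.sign e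

/-- `SignFlip G G' c` : `G'` is obtained from `G` by negating the sign of the chord `c`,
changing nothing else. -/
def SignFlip {n : ℕ} (G G' : GaussDiagram n) (c : Fin n) : Prop :=
  G'.endpoint = G.endpoint ∧ G'.sign = Function.update G.sign c (-G.sign c)

/-- An arc-shift move between Gauss diagrams (at some position, on some pair of chords). -/
def ArcShiftMove {n : ℕ} (G G' : GaussDiagram n) : Prop :=
  ∃ p c d, ArcShift G G' p c d

/-- A sign-flip move between Gauss diagrams (at some chord). -/
def SignFlipMove {n : ℕ} (G G' : GaussDiagram n) : Prop :=
  ∃ c, SignFlip G G' c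

/-- A move is either an arc-shift move or a sign-flip move. -/
def Move {n : ℕ} (G G' : GaussDiagram n) : Prop :=
  ArcShiftMove G G' ∨ SignFlipMove G G'

/-- A Gauss diagram is parallel if no two of its chords are interlinked. -/
def Parallel {n : ℕ} (G : GaussDiagram n) : Prop :=
  ∀ c d : Fin n, c ≠ d → ¬ Interlinked G c d

/-!
Whether two chords are interlinked depends only on whether their four endpoints alternate
around the circle, so it is symmetric and independent of the orientation of the chords.
Exchanging two cyclically adjacent endpoints of distinct chords `c`, `d` toggles whether
`c` and `d` alternate. For a diagram with two interlinked chords both chords are odd, so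
`J(G₀) = -1 + -1`, and an arc shift at any adjacent pair of endpoints of different chords
unlinks them, while `G₀` itself is not parallel.
-/

theorem inside_iff {m : ℕ} {a b x : Fin m} :
    Inside a b x ↔ (a < x ∧ x < b) ∨ (b < a ∧ (a < x ∨ x < b)) := by
  have val_sub : ∀ y z : Fin m,
      ((y - z : Fin m) : ℕ) = if z ≤ y then (y : ℕ) - z else m + y - z := by
    intro y z
    split_ifs with h
    · exact Fin.coe_sub_iff_le.2 h
    · exact Fin.coe_sub_iff_lt.2 (not_le.1 h)
  simp only [Inside, val_sub, Fin.lt_def, Fin.le_def]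
  have := x.isLt
  split_ifs <;> omega

theorem val_nextPos {m : ℕ} (p : Fin m) :
    (nextPos p : ℕ) = if (p : ℕ) + 1 < m then (p : ℕ) + 1 else 0 := by
  simp only [nextPos]
  split_ifs with h
  · exact Nat.mod_eq_of_lt h
  · simp [show (p : ℕ) + 1 = m by omega]

theorem xor_inside_swap_left {m : ℕ} {a b x y : Fin m} (hax : a ≠ x) (hay : a ≠ y)
    (hbx : b ≠ x) (hby : b ≠ y) :
    Xor (Inside b a x) (Inside b a y) ↔ Xor (Inside a b x) (Inside a b y) := by
  simp only [inside_iff, xor_def, Fin.lt_def, ne_eq, Fin.ext_iff] at hax hay hbx hby ⊢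
  constructor <;> intro h <;> omega

theorem xor_inside_comm {m : ℕ} {a b x y : Fin m} (hax : a ≠ x) (hay : a ≠ y)
    (hbx : b ≠ x) (hby : b ≠ y) :
    Xor (Inside a b x) (Inside a b y) ↔ Xor (Inside x y a) (Inside x y b) := by
  simp only [inside_iff, xor_def, Fin.lt_def, ne_eq, Fin.ext_iff] at hax hay hbx hby ⊢
  constructor <;> intro h <;> omega

theorem xor_inside_nextPos {m : ℕ} {p a b : Fin m} (hab : a ≠ b)
    (hqa : nextPos p ≠ a) (hqb : nextPos p ≠ b) :
    Xor (Inside (nextPos p) a p) (Inside (nextPos p) a b) ↔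
      ¬ Xor (Inside p a (nextPos p)) (Inside p a b) := by
  have hq := val_nextPos p
  simp only [inside_iff, xor_def, Fin.lt_def, ne_eq, Fin.ext_iff] at hab hqa hqb ⊢
  have := a.isLt
  have := b.isLt
  constructor <;> intro h <;> split_ifs at hq <;> omega

namespace GaussDiagram

section

variable {n : ℕ} (G : GaussDiagram n)

theorem endpoint_ne_of_ne {c d : Fin n} (hcd : c ≠ d) (u v : Bool) :
    G.endpoint (c, u) ≠ G.endpoint (d, v) :=
  G.endpoint.injective.ne (by simp [hcd])

theorem interlinked_iff_xor_inside {c d : Fin n} (hcd : c ≠ d) (s t : Bool) :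
    Interlinked G c d ↔
      Xor (Inside (G.endpoint (c, s)) (G.endpoint (c, !s)) (G.endpoint (d, t)))
        (Inside (G.endpoint (c, s)) (G.endpoint (c, !s)) (G.endpoint (d, !t))) := by
  have hne := G.endpoint_ne_of_ne hcd
  have hswap := xor_inside_swap_left (hne false false) (hne false true) (hne true false)
    (hne true true)
  cases s <;> cases t
  · rfl
  · exact iff_of_eq (xor_comm _ _)
  · exact hswap.symm
  · exact hswap.symm.trans (iff_of_eq (xor_comm _ _))

theorem interlinked_comm {c d : Fin n} (hcd : c ≠ d) :
    Interlinked G c d ↔ Interlinked G d c := by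
  have hne := G.endpoint_ne_of_ne hcd
  exact xor_inside_comm (hne _ _) (hne _ _) (hne _ _) (hne _ _)

theorem interlinked_of_arcShift {G' : GaussDiagram n} {p : Fin (2 * n)} {c d : Fin n}
    (h : ArcShift G G' p c d) : Interlinked G' c d ↔ ¬ Interlinked G c d := by
  obtain ⟨hcd, hc, hd, hG', -⟩ := h
  set q := nextPos p
  obtain ⟨s, hs⟩ : ∃ s, G.endpoint (c, s) = p := ⟨(G.endpoint.symm p).2, by simp [← hc]⟩
  obtain ⟨t, ht⟩ : ∃ t, G.endpoint (d, t) = q := ⟨(G.endpoint.symm q).2, by simp [← hd]⟩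
  have hne := G.endpoint_ne_of_ne hcd
  have hpa : G.endpoint (c, !s) ≠ p := hs ▸ G.endpoint.injective.ne (by simp)
  have hqa : G.endpoint (c, !s) ≠ q := ht ▸ hne _ _
  have hpb : G.endpoint (d, !t) ≠ p := hs ▸ (hne _ _).symm
  have hqb : G.endpoint (d, !t) ≠ q := ht ▸ G.endpoint.injective.ne (by simp)
  rw [G'.interlinked_iff_xor_inside hcd s t, G.interlinked_iff_xor_inside hcd s t, hG']
  simp only [Equiv.trans_apply, hs, ht, Equiv.swap_apply_left, Equiv.swap_apply_right,
    Equiv.swap_apply_of_ne_of_ne hpa hqa, Equiv.swap_apply_of_ne_of_ne hpb hqb]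
  exact xor_inside_nextPos (hne _ _) hqa.symm hqb.symm

theorem exists_chord_ne_chord_nextPos {c d : Fin n} (hcd : c ≠ d) :
    ∃ p, (G.endpoint.symm p).1 ≠ (G.endpoint.symm (nextPos p)).1 := by
  by_contra! hconst
  have hpos : 0 < 2 * n := (G.endpoint (c, false)).pos
  have hchord : ∀ k (hk : k < 2 * n),
      (G.endpoint.symm ⟨k, hk⟩).1 = (G.endpoint.symm ⟨0, hpos⟩).1 := by
    intro k
    induction k with
    | zero => intro _; rfl
    | succ k ih =>
      intro hk
      have hnext : nextPos (⟨k, by omega⟩ : Fin (2 * n)) = ⟨k + 1, hk⟩ :=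
        Fin.ext (Nat.mod_eq_of_lt hk)
      rw [← hnext, ← hconst, ih]
  have hc := hchord _ (G.endpoint (c, false)).isLt
  have hd := hchord _ (G.endpoint (d, false)).isLt
  simp only [Fin.eta, Equiv.symm_apply_apply] at hc hd
  exact hcd (hc.trans hd.symm)

theorem exists_arcShift {p : Fin (2 * n)}
    (hp : (G.endpoint.symm p).1 ≠ (G.endpoint.symm (nextPos p)).1) :
    ∃ G', ArcShift G G' p (G.endpoint.symm p).1 (G.endpoint.symm (nextPos p)).1 := by
  set c := (G.endpoint.symm p).1
  set d := (G.endpoint.symm (nextPos p)).1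
  refine ⟨⟨G.endpoint.trans (Equiv.swap p (nextPos p)),
    fun e => if e = c ∨ e = d then -G.sign e else G.sign e, fun e => ?_⟩,
    hp, rfl, rfl, rfl, rfl⟩
  rcases G.sign_pm e with h | h <;> split_ifs <;> simp [h]

theorem isLeast_one_of_move_to_parallel {G' : GaussDiagram n} (hG : ¬ Parallel G)
    (hmove : Move G G') (hG' : Parallel G') :
    IsLeast {m : ℕ | ∃ seq : ℕ → GaussDiagram n, seq 0 = G ∧
      (∀ i < m, Move (seq i) (seq (i + 1))) ∧ Parallel (seq m)} 1 := by
  refine ⟨⟨fun i => if i = 0 then G else G', rfl, fun i hi => ?_, hG'⟩, ?_⟩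
  · obtain rfl : i = 0 := by omega
    exact hmove
  · rintro m ⟨seq, h0, -, hm⟩
    by_contra! hlt
    obtain rfl : m = 0 := by omega
    exact hG (h0 ▸ hm)

end

section

variable (G : GaussDiagram 2)

theorem interlinked_iff_interlinked_zero_one {c d : Fin 2} (hcd : c ≠ d) :
    Interlinked G c d ↔ Interlinked G 0 1 := by
  fin_cases c <;> fin_cases d
  all_goals first
    | exact absurd rfl hcd
    | exact Iff.rfl
    | exact G.interlinked_comm (by decide)

theorem parallel_iff_not_interlinked_zero_one : Parallel G ↔ ¬ Interlinked G 0 1 :=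
  ⟨fun h => h 0 1 (by decide),
    fun h _ _ hcd => (G.interlinked_iff_interlinked_zero_one hcd).not.2 h⟩

theorem oddWrithe_of_interlinked (h : Interlinked G 0 1) :
    oddWrithe G = G.sign 0 + G.sign 1 := by
  have hodd : ∀ c, OddChord G c := by
    intro c
    have hfilter : (Finset.univ.filter fun d => d ≠ c ∧ Interlinked G c d) =
        Finset.univ.erase c := by
      ext d
      simp only [Finset.mem_filter, Finset.mem_univ, true_and, Finset.mem_erase, and_true,
        and_iff_left_iff_imp]
      exact fun hdc => (G.interlinked_iff_interlinked_zero_one hdc.symm).2 h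
    simp [OddChord, hfilter]
  simp [oddWrithe, hodd, Fin.sum_univ_two]

end

end GaussDiagram

/-- the Gauss diagram `G₀` of the left-hand virtual trefoil (two interlinked
chords, both of sign `-1`) has `J(G₀) = -2`, is not parallel, becomes parallel after a
single arc-shift move, and the minimal number of arc-shift or sign-flip moves needed to
make it parallel is exactly `1`. -/
theorem virtual_trefoil_arcShift_number (G₀ : GaussDiagram 2)
    (hinter : Interlinked G₀ 0 1)
    (hs0 : G₀.sign 0 = -1) (hs1 : G₀.sign 1 = -1) :
    oddWrithe G₀ = -2 ∧ ¬ Parallel G₀ ∧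
      (∃ G' : GaussDiagram 2, ArcShiftMove G₀ G' ∧ Parallel G') ∧
      IsLeast {m : ℕ | ∃ seq : ℕ → GaussDiagram 2, seq 0 = G₀ ∧
        (∀ i < m, Move (seq i) (seq (i + 1))) ∧ Parallel (seq m)} 1 := by
  obtain ⟨p, hp⟩ := G₀.exists_chord_ne_chord_nextPos (zero_ne_one : (0 : Fin 2) ≠ 1)
  obtain ⟨G', hG'⟩ := G₀.exists_arcShift hp
  have hnot : ¬ Parallel G₀ := fun h => h 0 1 (by decide) hinter
  have hpar : Parallel G' := by
    rw [G'.parallel_iff_not_interlinked_zero_one, ← G'.interlinked_iff_interlinked_zero_one hp,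
      G₀.interlinked_of_arcShift hG', G₀.interlinked_iff_interlinked_zero_one hp, not_not]
    exact hinter
  refine ⟨?_, hnot, ⟨G', ⟨_, _, _, hG'⟩, hpar⟩,
    G₀.isLeast_one_of_move_to_parallel hnot (Or.inl ⟨_, _, _, hG'⟩) hpar⟩
  rw [G₀.oddWrithe_of_interlinked hinter, hs0, hs1]
  norm_num
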